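/- If w is an infinite recurrent word that avoids the formula ABA.ACA.ABCA.ACBA.ABCBA (i.e., contains no occurrence of it), then w is square-free. -/
import Mathlib


/-- The finite factor of the infinite word `w` starting at position `i` of length `n`. -/
def extract {α : Type*} (w : ℕ → α) (i n : ℕ) : List α :=
  (List.range n).map (fun k => w (i + k))

/-- `u` is a (finite) factor of the infinite word `w`. -/
def IsFactorOf {α : Type*} (u : List α) (w : ℕ → α) : Prop :=
  ∃ i, u = extract w i u.length

/-- A morphism (given on variables/letters) is non-erasing. -/
def NonErasing {V α : Type*} (h : V → List α) : Prop := ∀ v, h v ≠ []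

/-- The image of a pattern `p` under the morphism induced by `h`. -/
def patImage {V α : Type*} (h : V → List α) (p : List V) : List α :=
  (p.map h).flatten

/-- `h` is an occurrence of the formula `f` (a set of fragments) in the infinite word `w`:
`h` is non-erasing and the `h`-image of every fragment of `f` is a factor of `w`. -/
def OccursIn {V α : Type*} (f : Set (List V)) (h : V → List α) (w : ℕ → α) : Prop :=
  NonErasing h ∧ ∀ p ∈ f, IsFactorOf (patImage h p) w

/-- The infinite word `w` avoids the formula `f`. -/
def Avoids {V α : Type*} (w : ℕ → α) (f : Set (List V)) : Prop :=
  ∀ h : V → List α, ¬ OccursIn f h w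

/-- An infinite word is recurrent if every factor occurs infinitely often. -/
def Recurrent {α : Type*} (w : ℕ → α) : Prop :=
  ∀ u : List α, IsFactorOf u w → ∀ N, ∃ i ≥ N, u = extract w i u.length

/-- An infinite word is square-free if it has no factor `uu` with `u` nonempty. -/
def SquareFree {α : Type*} (w : ℕ → α) : Prop :=
  ∀ u : List α, u ≠ [] → ¬ IsFactorOf (u ++ u) w

/-- The formula `f'` divides the formula `f`: some non-erasing morphism maps every
fragment of `f'` to a factor of some fragment of `f`. -/
def Divides {V' V : Type*} (f' : Set (List V')) (f : Set (List V)) : Prop :=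
  ∃ h : V' → List V, NonErasing h ∧ ∀ q ∈ f', ∃ p ∈ f, patImage h q <:+: p

/-- The avoidability index of a formula: the least alphabet size over which there is an
infinite word avoiding it. -/
noncomputable def lamIdx {V : Type*} (f : Set (List V)) : ℕ :=
  sInf {n : ℕ | ∃ w : ℕ → Fin n, Avoids w f}

/-- A formula is avoidable if some infinite word over some finite alphabet avoids it. -/
def Avoidable {V : Type*} (f : Set (List V)) : Prop :=
  ∃ (n : ℕ) (w : ℕ → Fin n), Avoids w f

/-- An infinite word is `r`-free: every factor of the form `x ++ y ++ x` with `x ≠ []`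
(a repetition of period `|xy|` and exponent `|xyx|/|xy|`) has exponent `< r`. -/
def AlphaFree {α : Type*} (w : ℕ → α) (r : ℝ) : Prop :=
  ∀ x y : List α, x ≠ [] → IsFactorOf (x ++ y ++ x) w →
    ((2 * x.length + y.length : ℝ) / (x.length + y.length)) < r

/-- An infinite word is `r⁺`-free: every such repetition has exponent `≤ r`. -/
def AlphaPlusFree {α : Type*} (w : ℕ → α) (r : ℝ) : Prop :=
  ∀ x y : List α, x ≠ [] → IsFactorOf (x ++ y ++ x) w →
    ((2 * x.length + y.length : ℝ) / (x.length + y.length)) ≤ r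

/-- A finite word is `r⁺`-free. -/
def AlphaPlusFreeList {α : Type*} (u : List α) (r : ℝ) : Prop :=
  ∀ x y : List α, x ≠ [] → (x ++ y ++ x) <:+: u →
    ((2 * x.length + y.length : ℝ) / (x.length + y.length)) ≤ r

/-- The formula ABA.ACA.ABCA.ACBA.ABCBA, with variables A=0, B=1, C=2. -/
def sqfFormula : Set (List (Fin 3)) :=
  {[0,1,0], [0,2,0], [0,1,2,0], [0,2,1,0], [0,1,2,1,0]}

lemma extract_length {α : Type*} (w : ℕ → α) (i n : ℕ) : (extract w i n).length = n := by
  simp [extract]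

lemma extract_add {α : Type*} (w : ℕ → α) (i m n : ℕ) :
    extract w i (m + n) = extract w i m ++ extract w (i + m) n := by
  simp [extract, List.range_add, Function.comp, Nat.add_assoc, Nat.add_comm, Nat.add_left_comm]

lemma factor_of_infix {α : Type*} {u v : List α} {w : ℕ → α}
    (h : u <:+: v) (hv : IsFactorOf v w) : IsFactorOf u w := by
  obtain ⟨s, t, hst⟩ := h
  obtain ⟨j, hj⟩ := hv
  have hlen : v.length = s.length + (u.length + t.length) := by
    rw [← hst]; simp [Nat.add_assoc]
  rw [hlen, extract_add, extract_add] at hj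
  rw [← hst, List.append_assoc] at hj
  have h2 := (List.append_inj hj (by rw [extract_length])).2
  exact ⟨j + s.length, (List.append_inj h2 (by rw [extract_length])).1⟩

/-- every infinite recurrent word avoiding `ABA.ACA.ABCA.ACBA.ABCBA`
is square-free. -/
theorem stmt1 {α : Type*} (w : ℕ → α) (hrec : Recurrent w) (hav : Avoids w sqfFormula) :
    SquareFree w := by
  intro u hu hsq
  obtain ⟨i, hi⟩ := hsq
  -- second occurrence of the square, giving F = uu ++ g ++ uu
  obtain ⟨j, hj, hjj⟩ := hrec (u ++ u) ⟨i, hi⟩ (i + (u ++ u).length)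
  set L := (u ++ u).length with hL
  set g : List α := extract w (i + L) (j - (i + L)) with hg
  have hglen : g.length = j - (i + L) := extract_length ..
  have hF : (u ++ u) ++ g ++ (u ++ u) = extract w i (L + (j - (i + L)) + L) := by
    rw [extract_add w i (L + (j - (i + L))) L, extract_add w i L (j - (i + L)),
      show i + (L + (j - (i + L))) = j from by omega, ← hi, ← hjj]
  set Lf := L + (j - (i + L)) + L with hLf
  have hFlen : ((u ++ u) ++ g ++ (u ++ u)).length = Lf := by
    simp only [List.length_append, hglen, hLf, hL]
    try omega
  have hFfac : IsFactorOf ((u ++ u) ++ g ++ (u ++ u)) w := ⟨i, by rw [hFlen]; exact hF⟩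
  -- second occurrence of F, giving W = F ++ h2 ++ F
  obtain ⟨k, hk, hkk⟩ := hrec _ hFfac (i + Lf)
  rw [hFlen] at hkk
  set h2 : List α := extract w (i + Lf) (k - (i + Lf)) with hh2
  have hh2len : h2.length = k - (i + Lf) := extract_length ..
  have hW : ((u ++ u) ++ g ++ (u ++ u)) ++ h2 ++ ((u ++ u) ++ g ++ (u ++ u))
      = extract w i (Lf + (k - (i + Lf)) + Lf) := by
    rw [extract_add w i (Lf + (k - (i + Lf))) Lf, extract_add w i Lf (k - (i + Lf)),
      show i + (Lf + (k - (i + Lf))) = k from by omega, ← hF, ← hkk]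
  have hWlen : (((u ++ u) ++ g ++ (u ++ u)) ++ h2 ++ ((u ++ u) ++ g ++ (u ++ u))).length
      = Lf + (k - (i + Lf)) + Lf := by
    have := hFlen
    simp only [List.length_append] at this ⊢
    omega
  have hWfac : IsFactorOf (((u ++ u) ++ g ++ (u ++ u)) ++ h2 ++ ((u ++ u) ++ g ++ (u ++ u))) w :=
    ⟨i, by rw [hWlen]; exact hW⟩
  -- the occurrence of the formula: A = u, B = u g u, C = u h2 u
  refine hav ![u, u ++ g ++ u, u ++ h2 ++ u] ⟨?_, ?_⟩
  · intro v
    fin_cases v <;> simp [hu]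
  · intro p hp
    simp only [sqfFormula, Set.mem_insert_iff, Set.mem_singleton_iff] at hp
    rcases hp with h | h | h | h | h <;> subst h
    · have e : patImage ![u, u ++ g ++ u, u ++ h2 ++ u] [0, 1, 0]
          = u ++ (u ++ g ++ u) ++ u := by
        simp [patImage, List.append_assoc]
      rw [e]
      exact factor_of_infix
        ⟨[], h2 ++ ((u ++ u) ++ g ++ (u ++ u)), by simp [List.append_assoc]⟩ hWfac
    · have e : patImage ![u, u ++ g ++ u, u ++ h2 ++ u] [0, 2, 0]
          = u ++ (u ++ h2 ++ u) ++ u := by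
        simp [patImage, List.append_assoc]
      rw [e]
      exact factor_of_infix
        ⟨u ++ u ++ g, g ++ u ++ u, by simp [List.append_assoc]⟩ hWfac
    · have e : patImage ![u, u ++ g ++ u, u ++ h2 ++ u] [0, 1, 2, 0]
          = u ++ (u ++ g ++ u) ++ (u ++ h2 ++ u) ++ u := by
        simp [patImage, List.append_assoc]
      rw [e]
      exact factor_of_infix
        ⟨[], g ++ u ++ u, by simp [List.append_assoc]⟩ hWfac
    · have e : patImage ![u, u ++ g ++ u, u ++ h2 ++ u] [0, 2, 1, 0]
          = u ++ (u ++ h2 ++ u) ++ (u ++ g ++ u) ++ u := by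
        simp [patImage, List.append_assoc]
      rw [e]
      exact factor_of_infix
        ⟨u ++ u ++ g, [], by simp [List.append_assoc]⟩ hWfac
    · have e : patImage ![u, u ++ g ++ u, u ++ h2 ++ u] [0, 1, 2, 1, 0]
          = u ++ (u ++ g ++ u) ++ (u ++ h2 ++ u) ++ (u ++ g ++ u) ++ u := by
        simp [patImage, List.append_assoc]
      rw [e]
      exact factor_of_infix
        ⟨[], [], by simp [List.append_assoc]⟩ hWfac
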